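/- Suppose v̂ ∈ ℝᵐ is a centered point for parameter μ > 0, i.e., for some x̂ ∈ ℝⁿ: √μ·Aᵀe^{v̂} = Wx̂ + c and √μ·e^{−v̂} = Ax̂ + b. Let d = d(v,μ) be the Newton direction at v ∈ ℝᵐ and define f(t) := h(v̂, v + t·d). Then f′(0) ≤ −(f(0) + ‖d‖²). -/

import Mathlib

open Matrix

/-- Elementwise exponentiation `e^v` of a vector. -/
noncomputable def expV {m : ℕ} (v : Fin m → ℝ) : Fin m → ℝ := fun i => Real.exp (v i)

/-- The log-domain Newton system: `(d, x)` satisfies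
`√μ·Aᵀ(eᵛ + eᵛ∘d) = Wx + c` and `√μ·(e^{−v} − e^{−v}∘d) = Ax + b`. -/
noncomputable def IsNewton {m n : ℕ} (A : Matrix (Fin m) (Fin n) ℝ) (b : Fin m → ℝ)
    (c : Fin n → ℝ) (W : Matrix (Fin n) (Fin n) ℝ) (μ : ℝ) (v d : Fin m → ℝ)
    (x : Fin n → ℝ) : Prop :=
  Real.sqrt μ • (Aᵀ).mulVec (expV v + expV v * d) = W.mulVec x + c ∧
  Real.sqrt μ • (expV (-v) - expV (-v) * d) = A.mulVec x + b

/-- `v` is a centered point for parameter `μ`, witnessed by `x`: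
`√μ·Aᵀeᵛ = Wx + c` and `√μ·e^{−v} = Ax + b`. -/
noncomputable def IsCentered {m n : ℕ} (A : Matrix (Fin m) (Fin n) ℝ) (b : Fin m → ℝ)
    (c : Fin n → ℝ) (W : Matrix (Fin n) (Fin n) ℝ) (μ : ℝ) (v : Fin m → ℝ)
    (x : Fin n → ℝ) : Prop :=
  Real.sqrt μ • (Aᵀ).mulVec (expV v) = W.mulVec x + c ∧
  Real.sqrt μ • expV (-v) = A.mulVec x + b

/-- The divergence `h(u,v) := ⟨eᵘ, e^{−v}⟩ + ⟨e^{−u}, eᵛ⟩ − 2m`. -/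
noncomputable def diverg {m : ℕ} (u v : Fin m → ℝ) : ℝ :=
  (∑ i, Real.exp (u i) * Real.exp (-v i)) + (∑ i, Real.exp (-u i) * Real.exp (v i))
    - 2 * m

/-- The Euclidean norm of a vector in `ℝᵐ`. -/
noncomputable def enorm {m : ℕ} (d : Fin m → ℝ) : ℝ := Real.sqrt (∑ i, d i ^ 2)

/-! The Newton residuals `p := eᵛ + eᵛ∘d − e^{v̂}` and `q := e^{−v} − e^{−v}∘d − e^{−v̂}` satisfy
`√μ·Aᵀp = Wy` and `√μ·q = Ay` with `y = x − x̂`, so `μ⟨p, q⟩ = ⟨Wy, y⟩ ≥ 0`. Expanding `⟨p, q⟩`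
coordinatewise (using `eᵛ e^{−v} = 1`) gives exactly `−(f(0) + ‖d‖² + f′(0))`. -/

theorem dotProduct_nonneg_of_smul_mulVec_eq {m n : ℕ} {A : Matrix (Fin m) (Fin n) ℝ}
    {W : Matrix (Fin n) (Fin n) ℝ} (hW : W.PosSemidef) {s : ℝ} (hs : s ≠ 0)
    {p q : Fin m → ℝ} {y : Fin n → ℝ} (hp : s • Aᵀ *ᵥ p = W *ᵥ y) (hq : s • q = A *ᵥ y) :
    0 ≤ p ⬝ᵥ q := by
  have hsq : s ^ 2 * (p ⬝ᵥ q) = W *ᵥ y ⬝ᵥ y := by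
    rw [← hp, ← mulVec_smul, mulVec_transpose, ← dotProduct_mulVec, ← hq,
      dotProduct_smul, smul_dotProduct, smul_eq_mul, smul_eq_mul, ← mul_assoc, sq]
  have hWy : 0 ≤ W *ᵥ y ⬝ᵥ y := by
    simpa [dotProduct_comm] using hW.dotProduct_mulVec_nonneg y
  exact nonneg_of_mul_nonneg_right (hsq ▸ hWy) (by positivity)

theorem IsNewton.residual_eq {m n : ℕ} {A : Matrix (Fin m) (Fin n) ℝ} {b : Fin m → ℝ}
    {c : Fin n → ℝ} {W : Matrix (Fin n) (Fin n) ℝ} {μ : ℝ} {v d vhat : Fin m → ℝ}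
    {x xhat : Fin n → ℝ} (hd : IsNewton A b c W μ v d x)
    (hcent : IsCentered A b c W μ vhat xhat) :
    Real.sqrt μ • Aᵀ *ᵥ (expV v + expV v * d - expV vhat) = W *ᵥ (x - xhat) ∧
      Real.sqrt μ • (expV (-v) - expV (-v) * d - expV (-vhat)) = A *ᵥ (x - xhat) := by
  constructor
  · rw [mulVec_sub, smul_sub, hd.1, hcent.1, mulVec_sub]
    abel
  · rw [smul_sub, hd.2, hcent.2, mulVec_sub]
    abel

theorem hasDerivAt_diverg_add_smul {m : ℕ} (u v d : Fin m → ℝ) (t : ℝ) :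
    HasDerivAt (fun s : ℝ => diverg u (v + s • d))
      (∑ i, (Real.exp (-u i) * Real.exp ((v + t • d) i)
        - Real.exp (u i) * Real.exp (-(v + t • d) i)) * d i) t := by
  have hline : ∀ i, HasDerivAt (fun s : ℝ => (v + s • d) i) (d i) t := fun i => by
    simpa using ((hasDerivAt_id t).mul_const (d i)).const_add (v i)
  have hsum := (HasDerivAt.fun_sum (u := Finset.univ) fun i _ =>
    ((hline i).fun_neg.exp.const_mul (Real.exp (u i)))).fun_add
    (HasDerivAt.fun_sum (u := Finset.univ) fun i _ =>
      (hline i).exp.const_mul (Real.exp (-u i)))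
  refine (hsum.sub_const (2 * (m : ℝ))).congr_deriv ?_
  rw [← Finset.sum_add_distrib]
  refine Finset.sum_congr rfl fun i _ => ?_
  ring

theorem sum_residual_mul_residual {m : ℕ} (u v d : Fin m → ℝ) :
    (expV v + expV v * d - expV u) ⬝ᵥ (expV (-v) - expV (-v) * d - expV (-u)) =
      -(diverg u v + ∑ i, d i ^ 2 +
        ∑ i, (Real.exp (-u i) * Real.exp (v i) - Real.exp (u i) * Real.exp (-v i)) * d i) := by
  have hm : (2 * m : ℝ) = ∑ _i : Fin m, (2 : ℝ) := by simp [mul_comm]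
  simp only [diverg, dotProduct, hm, ← Finset.sum_add_distrib, ← Finset.sum_sub_distrib,
    ← Finset.sum_neg_distrib]
  refine Finset.sum_congr rfl fun i _ => ?_
  have hv : Real.exp (v i) * Real.exp (-v i) = 1 := by rw [← Real.exp_add]; simp
  have hu : Real.exp (u i) * Real.exp (-u i) = 1 := by rw [← Real.exp_add]; simp
  simp only [Pi.add_apply, Pi.sub_apply, Pi.mul_apply, Pi.neg_apply, expV]
  linear_combination (1 - d i ^ 2) * hv + hu

theorem stmt_4_general {m n : ℕ} (A : Matrix (Fin m) (Fin n) ℝ) (b : Fin m → ℝ) (c : Fin n → ℝ)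
    (W : Matrix (Fin n) (Fin n) ℝ) (hW : W.PosSemidef)
    (μ : ℝ) (hμ : 0 < μ) (vhat : Fin m → ℝ) (xhat : Fin n → ℝ)
    (hcent : IsCentered A b c W μ vhat xhat)
    (v d : Fin m → ℝ) (x : Fin n → ℝ) (hd : IsNewton A b c W μ v d x) :
    deriv (fun t : ℝ => diverg vhat (v + t • d)) 0
      ≤ -(diverg vhat v + ∑ i, d i ^ 2) := by
  obtain ⟨hp, hq⟩ := hd.residual_eq hcent
  have hpq := dotProduct_nonneg_of_smul_mulVec_eq hW (Real.sqrt_ne_zero'.2 hμ) hp hq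
  rw [sum_residual_mul_residual] at hpq
  rw [(hasDerivAt_diverg_add_smul vhat v d 0).deriv]
  simp only [zero_smul, add_zero]
  linarith

/-- if `v̂` is a centered point for `μ > 0` and `d = d(v,μ)` is the Newton
direction at `v`, then `f(t) := h(v̂, v + t·d)` satisfies `f′(0) ≤ −(f(0) + ‖d‖²)`. -/
theorem stmt_4 {m n : ℕ} (A : Matrix (Fin m) (Fin n) ℝ) (b : Fin m → ℝ) (c : Fin n → ℝ)
    (W : Matrix (Fin n) (Fin n) ℝ) (hW : W.PosSemidef) (hAW : (Aᵀ * A + W).PosDef)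
    (μ : ℝ) (hμ : 0 < μ) (vhat : Fin m → ℝ) (xhat : Fin n → ℝ)
    (hcent : IsCentered A b c W μ vhat xhat)
    (v d : Fin m → ℝ) (x : Fin n → ℝ) (hd : IsNewton A b c W μ v d x) :
    deriv (fun t : ℝ => diverg vhat (v + t • d)) 0
      ≤ -(diverg vhat v + ∑ i, d i ^ 2) :=
  stmt_4_general A b c W hW μ hμ vhat xhat hcent v d x hd
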